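/- Let n ≥ 1, let 1 ≤ k < n, and let λ_1 ≥ λ_2 ≥ … ≥ λ_n ≥ 0 be a nonincreasing sequence of nonnegative reals (the eigenvalues of an n×n PSD matrix A in nonincreasing order, so that ‖A − A_k‖_F² = Σ_{i=k+1}^n λ_i² where A_k is the best rank-k approximation of A, and Tr(A) = Σ_{i=1}^n λ_i). Then sqrt(Σ_{i=k+1}^n λ_i²) ≤ (1/(2√k)) Σ_{i=1}^n λ_i. -/

import Mathlib

/-! With `c = λ_k`, every tail eigenvalue lies in `[0, c]`, so the tail sum of squares is at
most `c·b`, where `b` is the tail sum; the head sum `a` is at least `k·c`. Hence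
`k · ∑ tail λ_i² ≤ a·b ≤ (a + b)²/4` by AM-GM, and `a + b` is the trace. -/

open Finset

theorem sum_sq_le_mul_sum {ι : Type*} {s : Finset ι} {f : ι → ℝ} {c : ℝ}
    (hf : ∀ i ∈ s, 0 ≤ f i ∧ f i ≤ c) :
    ∑ i ∈ s, f i ^ 2 ≤ c * ∑ i ∈ s, f i := by
  rw [mul_sum]
  refine sum_le_sum fun i hi => ?_
  obtain ⟨h0, hc⟩ := hf i hi
  rw [sq]
  exact mul_le_mul_of_nonneg_right hc h0

theorem Real.sqrt_le_one_div_two_sqrt_mul_add {q a b k : ℝ} (ha : 0 ≤ a) (hb : 0 ≤ b)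
    (hk : 0 < k) (hq : k * q ≤ a * b) :
    √q ≤ 1 / (2 * √k) * (a + b) := by
  have hsk : 0 < √k := Real.sqrt_pos.mpr hk
  rw [Real.sqrt_le_left (by positivity), mul_pow, div_pow, mul_pow, Real.sq_sqrt hk.le,
    one_pow, div_mul_eq_mul_div, one_mul, le_div_iff₀ (by positivity)]
  nlinarith [four_mul_le_sq_add a b]

theorem psd_tail_frobenius_le_trace_general
    {n k : ℕ} (hk : 1 ≤ k) (hkn : k < n)
    (lam : ℕ → ℝ)
    (hmono : ∀ i j, i ≤ j → j < n → lam j ≤ lam i)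
    (hnonneg : ∀ i, i < n → 0 ≤ lam i) :
    Real.sqrt (∑ i ∈ Finset.Ico k n, lam i ^ 2)
      ≤ (1 / (2 * Real.sqrt k)) * ∑ i ∈ Finset.range n, lam i := by
  have hhead : k * lam k ≤ ∑ i ∈ range k, lam i := by
    simpa using card_nsmul_le_sum (range k) lam (lam k)
      fun i hi => hmono i k (mem_range.mp hi).le hkn
  have htail : ∑ i ∈ Ico k n, lam i ^ 2 ≤ lam k * ∑ i ∈ Ico k n, lam i :=
    sum_sq_le_mul_sum fun i hi =>
      ⟨hnonneg i (mem_Ico.mp hi).2, hmono k i (mem_Ico.mp hi).1 (mem_Ico.mp hi).2⟩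
  have htail_nonneg : 0 ≤ ∑ i ∈ Ico k n, lam i :=
    sum_nonneg fun i hi => hnonneg i (mem_Ico.mp hi).2
  rw [← sum_range_add_sum_Ico lam hkn.le]
  refine Real.sqrt_le_one_div_two_sqrt_mul_add
    (sum_nonneg fun i hi => hnonneg i ((mem_range.mp hi).trans hkn)) htail_nonneg
    (by exact_mod_cast hk) ?_
  calc (k : ℝ) * ∑ i ∈ Ico k n, lam i ^ 2
      ≤ k * (lam k * ∑ i ∈ Ico k n, lam i) := by gcongr
    _ ≤ (∑ i ∈ range k, lam i) * ∑ i ∈ Ico k n, lam i := by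
      rw [← mul_assoc]; gcongr

/-- **Eigenvalue-tail bound for the best rank-`k` approximation of a PSD matrix.**
If `lam 0 ≥ lam 1 ≥ … ≥ lam (n-1) ≥ 0` are the eigenvalues of an `n × n` PSD matrix in
nonincreasing order and `1 ≤ k < n`, then
`sqrt (∑_{i=k}^{n-1} (lam i)²) ≤ (1/(2√k)) ∑_{i=0}^{n-1} lam i`,
i.e. `‖A − A_k‖_F ≤ Tr(A)/(2√k)`. -/
theorem psd_tail_frobenius_le_trace
    {n k : ℕ} (hn : 1 ≤ n) (hk : 1 ≤ k) (hkn : k < n)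
    (lam : ℕ → ℝ)
    (hmono : ∀ i j, i ≤ j → j < n → lam j ≤ lam i)
    (hnonneg : ∀ i, i < n → 0 ≤ lam i) :
    Real.sqrt (∑ i ∈ Finset.Ico k n, lam i ^ 2)
      ≤ (1 / (2 * Real.sqrt k)) * ∑ i ∈ Finset.range n, lam i :=
  psd_tail_frobenius_le_trace_general hk hkn lam hmono hnonneg
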